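/- Let G be a topological gyrogroup and 𝒰 an open base at the identity e. Then for every U ∈ 𝒰 and every b ∈ G, there exists V ∈ 𝒰 such that ⋃_{v ∈ V} gyr[v, b](V) ⊆ U. -/

import Mathlib

class Gyrogroup (G : Type*) where
  add : G → G → G
  e : G
  neg : G → G
  gyr : G → G → G → G
  e_add : ∀ x, add e x = x
  add_e : ∀ x, add x e = x
  neg_add : ∀ x, add (neg x) x = e
  add_neg : ∀ x, add x (neg x) = e
  gyr_bijective : ∀ a b, Function.Bijective (gyr a b)
  gyr_add : ∀ a b x y, gyr a b (add x y) = add (gyr a b x) (gyr a b y)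
  left_gyroassoc : ∀ a b c, add a (add b c) = add (add a b) (gyr a b c)
  left_loop : ∀ a b, gyr (add a b) b = gyr a b

open Gyrogroup

/-- The gyrogroup cooperation `a ⊞ b = a ⊕ gyr[a, ⊖b](b)`. -/
def Gyrogroup.coadd {G : Type*} [Gyrogroup G] (a b : G) : G :=
  add a (gyr a (neg b) b)

/-- The codifference `a ⊟ b = a ⊞ (⊖b)`. -/
def Gyrogroup.cosub {G : Type*} [Gyrogroup G] (a b : G) : G :=
  coadd a (neg b)

/-! By left gyroassociativity `gyr[v, b](w) = ⊖(v ⊕ b) ⊕ (v ⊕ (b ⊕ w))`, so for fixed `b` the map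
`(v, w) ↦ gyr[v, b](w)` is continuous and sends `(e, e)` to `e`; a basic neighbourhood `V` with
`V × V` inside the preimage of `U` does the job. -/

open Topology

namespace Gyrogroup

variable {G : Type*} [Gyrogroup G]

theorem neg_add_add_eq_gyr (a x : G) : add (neg a) (add a x) = gyr (neg a) a x := by
  rw [left_gyroassoc, neg_add, e_add]

theorem add_left_cancel {a x y : G} (h : add a x = add a y) : x = y := by
  have h' := congrArg (add (neg a)) h
  rw [neg_add_add_eq_gyr, neg_add_add_eq_gyr] at h'
  exact (gyr_bijective (neg a) a).1 h'

theorem gyr_e_left (b x : G) : gyr e b x = x := by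
  have h := left_gyroassoc e b x
  rw [e_add, e_add] at h
  exact add_left_cancel h.symm

theorem gyr_neg_self (a x : G) : gyr (neg a) a x = x := by
  rw [← left_loop, neg_add, gyr_e_left]

theorem neg_add_cancel_left (a x : G) : add (neg a) (add a x) = x := by
  rw [neg_add_add_eq_gyr, gyr_neg_self]

theorem gyr_eq_neg_add_add (a b x : G) : gyr a b x = add (neg (add a b)) (add a (add b x)) := by
  rw [left_gyroassoc a b x, neg_add_cancel_left]

theorem continuous_gyr_of_continuous_add [TopologicalSpace G]
    (hadd : Continuous fun p : G × G => add p.1 p.2) (hneg : Continuous (neg : G → G)) (b : G) :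
    Continuous fun p : G × G => gyr p.1 b p.2 := by
  have hadd' {f g : G × G → G} (hf : Continuous f) (hg : Continuous g) :
      Continuous fun p => add (f p) (g p) :=
    hadd.comp (hf.prodMk hg)
  simp only [gyr_eq_neg_add_add]
  exact hadd' (hneg.comp (hadd' continuous_fst continuous_const))
    (hadd' continuous_fst (hadd' continuous_const continuous_snd))

end Gyrogroup

theorem hasBasis_nhds_of_isOpen_of_exists_subset {X : Type*} [TopologicalSpace X] {x : X}
    {𝒰 : Set (Set X)} (hopen : ∀ U ∈ 𝒰, IsOpen U ∧ x ∈ U)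
    (hbase : ∀ W : Set X, IsOpen W → x ∈ W → ∃ U ∈ 𝒰, U ⊆ W) :
    (𝓝 x).HasBasis (· ∈ 𝒰) id :=
  (nhds_basis_opens x).to_hasBasis (fun W ⟨hxW, hW⟩ => hbase W hW hxW)
    fun U hU => ⟨U, ⟨(hopen U hU).2, (hopen U hU).1⟩, subset_rfl⟩

theorem exists_V_gyr_subset {G : Type*} [Gyrogroup G] [TopologicalSpace G]
    (hadd : Continuous fun p : G × G => add p.1 p.2)
    (hneg : Continuous (neg : G → G))
    (𝒰 : Set (Set G))
    (hopen : ∀ U ∈ 𝒰, IsOpen U ∧ (e : G) ∈ U)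
    (hbase : ∀ W : Set G, IsOpen W → (e : G) ∈ W → ∃ U ∈ 𝒰, U ⊆ W) :
    ∀ U ∈ 𝒰, ∀ b : G, ∃ V ∈ 𝒰, ∀ v ∈ V, ∀ w ∈ V, gyr v b w ∈ U := by
  intro U hU b
  have hbasis := hasBasis_nhds_of_isOpen_of_exists_subset hopen hbase
  have hpre : (fun p : G × G => gyr p.1 b p.2) ⁻¹' U ∈ 𝓝 e ×ˢ 𝓝 e := by
    rw [← nhds_prod_eq]
    refine (continuous_gyr_of_continuous_add hadd hneg b).continuousAt.preimage_mem_nhds ?_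
    rw [gyr_e_left]
    exact hbasis.mem_of_mem hU
  obtain ⟨V, hV, hVV⟩ := hbasis.prod_self.mem_iff.1 hpre
  exact ⟨V, hV, fun v hv w hw => hVV (Set.mk_mem_prod hv hw)⟩
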